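/- Every element of the monoid M_n presented by generators e_1,...,e_{n-1}, \tau with the Temperley-Lieb relations is equal to a word in Jones normal form, i.e. a word of the form \tau^p (e_{i_1} e_{i_1-1} ... e_{j_1})(e_{i_2} e_{i_2-1} ... e_{j_2}) ... (e_{i_r} e_{i_r-1} ... e_{j_r}) with i_1 < i_2 < ... < i_r and j_1 < j_2 < ... < j_r and j_k \le i_k for each k. -/

import Mathlib

/-- Generators of the Temperley–Lieb monoid `M n`: `Sum.inl i` is the generator
`e_{i+1}` (for `i : Fin (n-1)`, so `e_1, …, e_{n-1}`) and `Sum.inr ()` is `τ`. -/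
abbrev TLGen (n : ℕ) := Sum (Fin (n - 1)) Unit

/-- `τ` as a letter. -/
abbrev tau (n : ℕ) : TLGen n := Sum.inr ()

/-- The defining relations of the monoid `M n`:
`e_i e_i = τ e_i`, `e_i τ = τ e_i`, `e_i e_j = e_j e_i` for `|i-j| > 1`, and
`e_i e_{i±1} e_i = e_i`. -/
inductive TLRel (n : ℕ) : List (TLGen n) → List (TLGen n) → Prop
  | square (i : Fin (n - 1)) :
      TLRel n [Sum.inl i, Sum.inl i] [tau n, Sum.inl i]
  | commTau (i : Fin (n - 1)) :
      TLRel n [Sum.inl i, tau n] [tau n, Sum.inl i]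
  | comm (i j : Fin (n - 1)) (h : (i : ℕ) + 1 < j ∨ (j : ℕ) + 1 < i) :
      TLRel n [Sum.inl i, Sum.inl j] [Sum.inl j, Sum.inl i]
  | braid (i j : Fin (n - 1)) (h : (i : ℕ) = j + 1 ∨ (j : ℕ) = i + 1) :
      TLRel n [Sum.inl i, Sum.inl j, Sum.inl i] [Sum.inl i]

/-- One application of a defining relation inside an arbitrary context. -/
def TLStep (n : ℕ) (x y : List (TLGen n)) : Prop :=
  ∃ u v a b, TLRel n a b ∧ x = u ++ a ++ v ∧ y = u ++ b ++ v

/-- Equality in the presented monoid `M n`. -/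
def TLEq (n : ℕ) : List (TLGen n) → List (TLGen n) → Prop :=
  Relation.EqvGen (TLStep n)

/-- The decreasing consecutive run `e_i e_{i-1} ⋯ e_j` (for `j ≤ i`). -/
def run (n : ℕ) (i j : Fin (n - 1)) : List (TLGen n) :=
  (List.range ((i : ℕ) - j + 1)).map fun t =>
    Sum.inl ⟨(i : ℕ) - t, lt_of_le_of_lt (Nat.sub_le _ _) i.isLt⟩


/-!
Words in Jones normal form, together with a power of `τ`, are closed under right
multiplication by a generator; this is proved by strong induction on a bound `c` for the
indices of the generators involved. Multiplying the last run `e_a ⋯ e_b` by `e_m` gives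
`τ e_a ⋯ e_b` when `m = b`, a new run when `m > a`, and otherwise `u e_a ⋯ e_{b'}` with `u`
a word in generators below `e_a`. The remaining runs times `u` are normalised by induction,
and a run whose top exceeds every top of a normal form is absorbed using the exchange identity
`(e_a ⋯ e_k)(e_b ⋯ e_j) = (e_a ⋯ e_j)(e_b ⋯ e_{k+2})` for `j ≤ k ≤ a < b`.
-/

open List

namespace TLEq

variable {n : ℕ} {x y z : List (TLGen n)}

@[refl]
protected theorem refl (x : List (TLGen n)) : TLEq n x x := Relation.EqvGen.refl x

protected theorem of_eq (h : x = y) : TLEq n x y := h ▸ TLEq.refl x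

@[symm]
protected theorem symm (h : TLEq n x y) : TLEq n y x := Relation.EqvGen.symm x y h

protected theorem trans (h : TLEq n x y) (h' : TLEq n y z) : TLEq n x z :=
  Relation.EqvGen.trans x y z h h'

instance : Trans (TLEq n) (TLEq n) (TLEq n) := ⟨TLEq.trans⟩

theorem of_rel (h : TLRel n x y) : TLEq n x y :=
  Relation.EqvGen.rel _ _ ⟨[], [], x, y, h, by simp, by simp⟩

theorem append_left (h : TLEq n x y) (z : List (TLGen n)) : TLEq n (z ++ x) (z ++ y) := by
  induction h with
  | rel _ _ hstep =>
    obtain ⟨u, v, a, b, hab, rfl, rfl⟩ := hstep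
    exact Relation.EqvGen.rel _ _ ⟨z ++ u, v, a, b, hab, by simp, by simp⟩
  | refl => exact TLEq.refl _
  | symm _ _ _ ih => exact ih.symm
  | trans _ _ _ _ _ ih ih' => exact ih.trans ih'

theorem append_right (h : TLEq n x y) (z : List (TLGen n)) : TLEq n (x ++ z) (y ++ z) := by
  induction h with
  | rel _ _ hstep =>
    obtain ⟨u, v, a, b, hab, rfl, rfl⟩ := hstep
    exact Relation.EqvGen.rel _ _ ⟨u, v ++ z, a, b, hab, by simp, by simp⟩
  | refl => exact TLEq.refl _
  | symm _ _ _ ih => exact ih.symm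
  | trans _ _ _ _ _ ih ih' => exact ih.trans ih'

theorem cons_comm {g : TLGen n} :
    ∀ {v : List (TLGen n)}, (∀ y ∈ v, TLEq n [g, y] [y, g]) → TLEq n (g :: v) (v ++ [g])
  | [], _ => TLEq.refl _
  | y :: v, hv =>
    calc TLEq n (g :: y :: v) ([y] ++ g :: v) := (hv y (by simp)).append_right v
      TLEq n _ ([y] ++ (v ++ [g])) := (cons_comm fun z hz => hv z (by simp [hz])).append_left [y]
      _ = (y :: v) ++ [g] := rfl

theorem append_comm :
    ∀ {u v : List (TLGen n)}, (∀ x ∈ u, ∀ y ∈ v, TLEq n [x, y] [y, x]) →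
      TLEq n (u ++ v) (v ++ u)
  | [], v, _ => by simpa using TLEq.refl v
  | x :: u, v, huv =>
    calc TLEq n ([x] ++ (u ++ v)) ([x] ++ (v ++ u)) :=
          (append_comm fun a ha b hb => huv a (by simp [ha]) b hb).append_left [x]
      TLEq n _ ((v ++ [x]) ++ u) := (cons_comm fun y hy => huv x (by simp) y hy).append_right u
      _ = v ++ x :: u := by simp

end TLEq

/-- The letter `e_{i+1}`, i.e. `Sum.inl i`; it is `τ` when `i` is out of range. -/
def gen (n i : ℕ) : TLGen n := if h : i < n - 1 then Sum.inl ⟨i, h⟩ else tau n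

/-- The letters `gen n b, gen n (b - 1), …, gen n k`; empty when `b < k`. -/
def descRun (n b k : ℕ) : List (TLGen n) := (List.range (b + 1 - k)).map fun t => gen n (b - t)

section Generators

variable {n : ℕ}

theorem gen_of_lt {i : ℕ} (h : i < n - 1) : gen n i = Sum.inl ⟨i, h⟩ := dif_pos h

theorem gen_val (i : Fin (n - 1)) : gen n i = Sum.inl i := gen_of_lt i.isLt

theorem tleq_gen_gen {i : ℕ} (hi : i < n - 1) : TLEq n [gen n i, gen n i] [tau n, gen n i] := by
  rw [gen_of_lt hi]
  exact .of_rel (.square _)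

theorem tleq_gen_comm {i j : ℕ} (hi : i < n - 1) (hj : j < n - 1) (h : i + 1 < j ∨ j + 1 < i) :
    TLEq n [gen n i, gen n j] [gen n j, gen n i] := by
  rw [gen_of_lt hi, gen_of_lt hj]
  exact .of_rel (.comm ⟨i, hi⟩ ⟨j, hj⟩ h)

theorem tleq_gen_braid {i j : ℕ} (hi : i < n - 1) (hj : j < n - 1) (h : i = j + 1 ∨ j = i + 1) :
    TLEq n [gen n i, gen n j, gen n i] [gen n i] := by
  rw [gen_of_lt hi, gen_of_lt hj]
  exact .of_rel (.braid ⟨i, hi⟩ ⟨j, hj⟩ h)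

theorem tleq_append_replicate_tau (u : List (TLGen n)) (p : ℕ) :
    TLEq n (u ++ replicate p (tau n)) (replicate p (tau n) ++ u) := by
  refine TLEq.append_comm fun x _ y hy => ?_
  rw [eq_of_mem_replicate hy]
  rcases x with i | ⟨⟩
  · exact .of_rel (.commTau i)
  · rfl

theorem descRun_of_lt {b k : ℕ} (h : b < k) : descRun n b k = [] := by
  simp [descRun, Nat.sub_eq_zero_of_le h]

theorem descRun_self (b : ℕ) : descRun n b b = [gen n b] := by
  simp [descRun]

theorem descRun_succ {k j : ℕ} (h : j ≤ k + 1) :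
    descRun n (k + 1) j = gen n (k + 1) :: descRun n k j := by
  rw [descRun, show k + 1 + 1 - j = (k + 1 - j) + 1 by omega, range_succ_eq_map]
  simp [descRun, Nat.add_sub_add_right]

theorem exists_descRun_eq_cons {k j : ℕ} (h : j ≤ k) : ∃ T, descRun n k j = gen n k :: T := by
  rcases k with _ | k
  · exact ⟨[], by rw [Nat.le_zero.1 h, descRun_self]⟩
  · exact ⟨_, descRun_succ (by omega)⟩

theorem descRun_split {j k b : ℕ} (hjk : j ≤ k) (hkb : k ≤ b) :
    descRun n b j = descRun n b (k + 1) ++ descRun n k j := by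
  rw [descRun, show b + 1 - j = (b - k) + (k + 1 - j) by omega, range_add, map_append, map_map,
    descRun, descRun, show b + 1 - (k + 1) = b - k by omega]
  congr 1
  refine map_congr_left fun t _ => ?_
  simp only [Function.comp_apply]
  congr 1
  omega

theorem descRun_concat {k b : ℕ} (h : k ≤ b) :
    descRun n b (k + 1) ++ [gen n k] = descRun n b k := by
  rw [descRun_split le_rfl h, descRun_self]

theorem mem_descRun {x : TLGen n} {b k : ℕ} (h : x ∈ descRun n b k) :
    ∃ m, k ≤ m ∧ m ≤ b ∧ x = gen n m := by
  obtain ⟨t, ht, rfl⟩ := mem_map.1 h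
  exact ⟨b - t, by simp at ht; omega, by omega, rfl⟩

theorem tleq_descRun_append_comm {b k b' k' : ℕ} (hb : b < n - 1) (h : b' + 1 < k) :
    TLEq n (descRun n b k ++ descRun n b' k') (descRun n b' k' ++ descRun n b k) := by
  refine TLEq.append_comm fun x hx y hy => ?_
  obtain ⟨m, hkm, hmb, rfl⟩ := mem_descRun hx
  obtain ⟨m', -, hm'b', rfl⟩ := mem_descRun hy
  exact tleq_gen_comm (by omega) (by omega) (by omega)

end Generators

def LettersBelow {n : ℕ} (c : ℕ) (u : List (TLGen n)) : Prop :=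
  ∀ x ∈ u, x = tau n ∨ ∃ m < c, x = gen n m

section Runs

variable {n : ℕ}

theorem lettersBelow_descRun {c b : ℕ} (h : b < c) (k : ℕ) : LettersBelow c (descRun n b k) :=
  fun x hx => by
    obtain ⟨m, -, hmb, rfl⟩ := mem_descRun hx
    exact Or.inr ⟨m, by omega, rfl⟩

theorem tleq_gen_gen_succ_descRun {k j : ℕ} (hjk : j ≤ k) (hk : k + 1 < n - 1) :
    TLEq n (gen n k :: gen n (k + 1) :: descRun n k j) (descRun n k j) := by
  obtain ⟨T, hT⟩ := exists_descRun_eq_cons (n := n) hjk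
  rw [hT]
  exact (tleq_gen_braid (by omega) hk (Or.inr rfl)).append_right T

theorem tleq_descRun_append_descRun {a b j k : ℕ} (hjk : j ≤ k) (hka : k ≤ a) (hab : a < b)
    (hb : b < n - 1) :
    TLEq n (descRun n a k ++ descRun n b j) (descRun n a j ++ descRun n b (k + 2)) :=
  calc TLEq n (descRun n a k ++ descRun n b j)
        (descRun n a (k + 1) ++ ((descRun n k k ++ descRun n b (k + 2)) ++
          gen n (k + 1) :: descRun n k j)) := .of_eq <| by
        rw [← descRun_concat hka, descRun_split (by omega) (by omega : k + 1 ≤ b),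
          descRun_succ (by omega), descRun_self]
        simp
    TLEq n _ (descRun n a (k + 1) ++ ((descRun n b (k + 2) ++ descRun n k k) ++
          gen n (k + 1) :: descRun n k j)) :=
        (((tleq_descRun_append_comm hb (by omega)).symm.append_right _).append_left _)
    _ = descRun n a (k + 1) ++ (descRun n b (k + 2) ++
          (gen n k :: gen n (k + 1) :: descRun n k j)) := by simp [descRun_self]
    TLEq n _ (descRun n a (k + 1) ++ (descRun n b (k + 2) ++ descRun n k j)) :=
        ((tleq_gen_gen_succ_descRun hjk (by omega)).append_left _).append_left _
    TLEq n _ (descRun n a (k + 1) ++ (descRun n k j ++ descRun n b (k + 2))) :=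
        (tleq_descRun_append_comm hb (by omega)).append_left _
    _ = descRun n a j ++ descRun n b (k + 2) := by
        rw [descRun_split hjk hka, append_assoc]

theorem tleq_descRun_append_gen_self {a b : ℕ} (hba : b ≤ a) (ha : a < n - 1) :
    TLEq n (descRun n a b ++ [gen n b]) (tau n :: descRun n a b) :=
  calc TLEq n (descRun n a b ++ [gen n b]) (descRun n a (b + 1) ++ [gen n b, gen n b]) :=
        .of_eq <| by rw [← descRun_concat hba]; simp
    TLEq n _ (descRun n a (b + 1) ++ [tau n, gen n b]) :=
        (tleq_gen_gen (by omega)).append_left _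
    TLEq n _ ([tau n] ++ (descRun n a (b + 1) ++ [gen n b])) := by
        simpa using (tleq_append_replicate_tau (descRun n a (b + 1)) 1).append_right [gen n b]
    _ = tau n :: descRun n a b := by rw [descRun_concat hba]; rfl

theorem exists_descRun_append_gen_of_lt {a b m : ℕ} (hmb : m < b) (hba : b ≤ a)
    (ha : a < n - 1) :
    ∃ u b', LettersBelow a u ∧ b' ≤ a ∧
      TLEq n (descRun n a b ++ [gen n m]) (u ++ descRun n a b') := by
  rcases (by omega : m + 1 = b ∨ m + 1 < b) with rfl | hfar
  · exact ⟨[], m, by simp [LettersBelow], by omega,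
      .of_eq (by rw [descRun_concat (by omega), nil_append])⟩
  · refine ⟨descRun n m m, b, lettersBelow_descRun (by omega) m, hba, ?_⟩
    rw [← descRun_self m]
    exact tleq_descRun_append_comm ha (by omega)

theorem exists_descRun_append_gen_of_gt {a b m : ℕ} (hbm : b < m) (hma : m ≤ a)
    (ha : a < n - 1) :
    ∃ u b', LettersBelow a u ∧ b' ≤ a ∧
      TLEq n (descRun n a b ++ [gen n m]) (u ++ descRun n a b') := by
  rcases (by omega : m = b + 1 ∨ b + 2 ≤ m) with rfl | hm
  · refine ⟨[], b + 1, by simp [LettersBelow], hma, ?_⟩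
    calc TLEq n (descRun n a b ++ [gen n (b + 1)])
          (descRun n a (b + 2) ++ [gen n (b + 1), gen n b, gen n (b + 1)]) := .of_eq <| by
          rw [descRun_split (by omega) hma, descRun_succ (Nat.le_succ b), descRun_self]
          simp
      TLEq n _ (descRun n a (b + 2) ++ [gen n (b + 1)]) :=
          (tleq_gen_braid (by omega) (by omega) (Or.inl rfl)).append_left _
      _ = [] ++ descRun n a (b + 1) := by rw [descRun_concat hma]; rfl
  · obtain ⟨k, rfl⟩ : ∃ k, m = k + 2 := ⟨m - 2, by omega⟩
    refine ⟨descRun n k b, k + 2, lettersBelow_descRun (by omega) b, hma, ?_⟩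
    calc TLEq n (descRun n a b ++ [gen n (k + 2)])
          (descRun n a (k + 3) ++ gen n (k + 2) :: gen n (k + 1) ::
            (descRun n k b ++ descRun n (k + 2) (k + 2))) := .of_eq <| by
          rw [descRun_split (by omega) hma, descRun_succ (by omega), descRun_succ (by omega),
            descRun_self]
          simp
      TLEq n _ (descRun n a (k + 3) ++ gen n (k + 2) :: gen n (k + 1) ::
            (descRun n (k + 2) (k + 2) ++ descRun n k b)) :=
          ((tleq_descRun_append_comm (by omega) (by omega)).symm.append_left
            [gen n (k + 2), gen n (k + 1)]).append_left _
      _ = descRun n a (k + 3) ++ [gen n (k + 2), gen n (k + 1), gen n (k + 2)] ++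
            descRun n k b := by simp [descRun_self]
      TLEq n _ (descRun n a (k + 3) ++ [gen n (k + 2)] ++ descRun n k b) :=
          ((tleq_gen_braid (by omega) (by omega) (Or.inl rfl)).append_left _).append_right _
      _ = descRun n a (k + 2) ++ descRun n k b := by rw [descRun_concat hma]
      TLEq n _ (descRun n k b ++ descRun n a (k + 2)) :=
          tleq_descRun_append_comm ha (by omega)

end Runs

/-- A normal form is encoded by the list of its runs `(top, bottom)`. -/
def jonesWord (n : ℕ) (L : List (ℕ × ℕ)) : List (TLGen n) :=
  (L.map fun r => descRun n r.1 r.2).flatten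

structure IsJonesNF (c : ℕ) (L : List (ℕ × ℕ)) : Prop where
  pairwise : L.Pairwise fun r s => r.1 < s.1 ∧ r.2 < s.2
  snd_le_fst : ∀ r ∈ L, r.2 ≤ r.1
  fst_lt : ∀ r ∈ L, r.1 < c

def HasJonesNF {n : ℕ} (c : ℕ) (w : List (TLGen n)) : Prop :=
  ∃ p L, IsJonesNF c L ∧ TLEq n w (replicate p (tau n) ++ jonesWord n L)

section NormalForm

variable {n c : ℕ}

@[simp]
theorem jonesWord_nil : jonesWord n [] = [] := rfl

@[simp]
theorem jonesWord_append (L L' : List (ℕ × ℕ)) :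
    jonesWord n (L ++ L') = jonesWord n L ++ jonesWord n L' := by
  simp [jonesWord]

@[simp]
theorem jonesWord_cons (r : ℕ × ℕ) (L : List (ℕ × ℕ)) :
    jonesWord n (r :: L) = descRun n r.1 r.2 ++ jonesWord n L := by
  simp [jonesWord]

theorem IsJonesNF.nil : IsJonesNF c [] := ⟨.nil, by simp, by simp⟩

theorem IsJonesNF.mono {c' : ℕ} {L : List (ℕ × ℕ)} (h : IsJonesNF c L) (hc : c ≤ c') :
    IsJonesNF c' L :=
  ⟨h.pairwise, h.snd_le_fst, fun r hr => (h.fst_lt r hr).trans_le hc⟩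

theorem isJonesNF_append_singleton {L : List (ℕ × ℕ)} {a b : ℕ} :
    IsJonesNF c (L ++ [(a, b)]) ↔
      IsJonesNF a L ∧ (∀ r ∈ L, r.2 < b) ∧ b ≤ a ∧ a < c := by
  constructor
  · rintro ⟨hp, hle, hlt⟩
    rw [pairwise_append] at hp
    have hlast : ∀ r ∈ L, r.1 < a ∧ r.2 < b :=
      fun r hr => hp.2.2 r hr _ (mem_singleton_self _)
    rw [forall_mem_append, forall_mem_singleton] at hle hlt
    exact ⟨⟨hp.1, hle.1, fun r hr => (hlast r hr).1⟩, fun r hr => (hlast r hr).2,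
      hle.2, hlt.2⟩
  · rintro ⟨hL, hb, hba, hac⟩
    refine ⟨pairwise_append.2 ⟨hL.pairwise, pairwise_singleton _ _, ?_⟩, ?_, ?_⟩
    · simpa using fun r hr => And.intro (hL.fst_lt r hr) (hb r hr)
    · exact forall_mem_append.2 ⟨hL.snd_le_fst, forall_mem_singleton.2 hba⟩
    · exact forall_mem_append.2
        ⟨fun r hr => (hL.fst_lt r hr).trans hac, forall_mem_singleton.2 hac⟩

theorem HasJonesNF.of_tleq {w w' : List (TLGen n)} (h : TLEq n w w') (h' : HasJonesNF c w') :
    HasJonesNF c w :=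
  let ⟨p, L, hL, hw'⟩ := h'
  ⟨p, L, hL, h.trans hw'⟩

theorem HasJonesNF.replicate_tau_append {w : List (TLGen n)} (h : HasJonesNF c w) (p : ℕ) :
    HasJonesNF c (replicate p (tau n) ++ w) :=
  let ⟨q, L, hL, hw⟩ := h
  ⟨p + q, L, hL, by rw [replicate_add, append_assoc]; exact hw.append_left _⟩

end NormalForm

section Closure

variable {n c : ℕ}

/-- The bound `max b (B + 1)` on the bottoms is the invariant that lets the exchanged run
`e_a ⋯ e_{k+2}` be appended after the recursive call. -/
theorem exists_isJonesNF_append_descRun {L : List (ℕ × ℕ)} {a b B : ℕ} (hL : IsJonesNF a L)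
    (hLB : ∀ r ∈ L, r.2 < B) (hba : b ≤ a) (ha : a < n - 1) :
    ∃ L', IsJonesNF (a + 1) L' ∧ (∀ r ∈ L', r.2 ≤ max b (B + 1)) ∧
      TLEq n (jonesWord n L ++ descRun n a b) (jonesWord n L') := by
  induction L using List.reverseRecOn generalizing a b B with
  | nil =>
    refine ⟨[(a, b)], ?_, by simp, .of_eq (by simp)⟩
    simpa using isJonesNF_append_singleton (L := []).2 ⟨.nil, by simp, hba, by omega⟩
  | append_singleton L r ih =>
    obtain ⟨a', k⟩ := r
    rw [isJonesNF_append_singleton] at hL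
    obtain ⟨hL, hLk, hka', ha'a⟩ := hL
    have hkB : k < B := hLB _ (mem_append_right _ (mem_singleton_self _))
    rcases lt_or_ge k b with hkb | hbk
    · refine ⟨L ++ [(a', k)] ++ [(a, b)], isJonesNF_append_singleton.2
        ⟨isJonesNF_append_singleton.2 ⟨hL, hLk, hka', ha'a⟩, ?_, hba, by omega⟩, ?_,
        .of_eq (by simp)⟩
      · exact forall_mem_append.2
          ⟨fun r hr => (hLk r hr).trans hkb, forall_mem_singleton.2 hkb⟩
      · refine forall_mem_append.2 ⟨fun r hr => ?_, forall_mem_singleton.2 (le_max_left _ _)⟩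
        have := hLB r hr
        omega
    · obtain ⟨L₁, hL₁, hL₁B, hL₁eq⟩ := ih hL hLk (hbk.trans hka') (ha'a.trans ha)
      have hword : TLEq n (jonesWord n (L ++ [(a', k)]) ++ descRun n a b)
          (jonesWord n L₁ ++ descRun n a (k + 2)) :=
        calc TLEq n (jonesWord n (L ++ [(a', k)]) ++ descRun n a b)
              (jonesWord n L ++ (descRun n a' k ++ descRun n a b)) := .of_eq (by simp)
          TLEq n _ (jonesWord n L ++ descRun n a' b ++ descRun n a (k + 2)) := by
              rw [append_assoc]
              exact (tleq_descRun_append_descRun hbk hka' ha'a ha).append_left _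
          TLEq n _ _ := hL₁eq.append_right _
      rcases lt_or_ge a (k + 2) with hak | hka
      · refine ⟨L₁, hL₁.mono (by omega), fun r hr => ?_,
          by simpa [descRun_of_lt hak] using hword⟩
        have := hL₁B r hr
        omega
      · refine ⟨L₁ ++ [(a, k + 2)], isJonesNF_append_singleton.2
          ⟨hL₁.mono (by omega), fun r hr => ?_, hka, by omega⟩, ?_, by simpa using hword⟩
        · have := hL₁B r hr
          omega
        · refine forall_mem_append.2 ⟨fun r hr => ?_, forall_mem_singleton.2 ?_⟩
          · have := hL₁B r hr
            omega
          · show k + 2 ≤ max b (B + 1)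
            omega

theorem HasJonesNF.append_descRun {a b : ℕ} {v : List (TLGen n)} (h : HasJonesNF a v)
    (hba : b ≤ a) (hac : a < c) (hc : c ≤ n - 1) : HasJonesNF c (v ++ descRun n a b) := by
  obtain ⟨p, L, hL, hv⟩ := h
  have ha : a < n - 1 := by omega
  obtain ⟨L', hL', -, hL'eq⟩ := exists_isJonesNF_append_descRun (B := a) hL
    (fun r hr => (hL.snd_le_fst r hr).trans_lt (hL.fst_lt r hr)) hba ha
  refine ⟨p, L', hL'.mono hac, ?_⟩
  calc TLEq n (v ++ descRun n a b) (replicate p (tau n) ++ (jonesWord n L ++ descRun n a b)) := by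
        rw [← append_assoc]
        exact hv.append_right _
    TLEq n _ _ := hL'eq.append_left _

theorem hasJonesNF_jonesWord_append_gen (hc : c ≤ n - 1)
    (ih : ∀ a < c, ∀ {L : List (ℕ × ℕ)} {u : List (TLGen n)},
      IsJonesNF a L → LettersBelow a u → HasJonesNF a (jonesWord n L ++ u))
    {L : List (ℕ × ℕ)} (hL : IsJonesNF c L) {m : ℕ} (hm : m < c) :
    HasJonesNF c (jonesWord n L ++ [gen n m]) := by
  rcases L.eq_nil_or_concat' with rfl | ⟨L, ⟨a, b⟩, rfl⟩
  · refine ⟨0, [(m, m)], ?_, .of_eq (by simp [descRun_self])⟩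
    simpa using isJonesNF_append_singleton (L := []).2 ⟨.nil, by simp, le_rfl, hm⟩
  rw [isJonesNF_append_singleton] at hL
  obtain ⟨hL, hLb, hba, hac⟩ := hL
  have ha : a < n - 1 := by omega
  rcases lt_or_ge a m with ham | hma
  · refine ⟨0, L ++ [(a, b)] ++ [(m, m)], isJonesNF_append_singleton.2
      ⟨isJonesNF_append_singleton.2 ⟨hL, hLb, hba, ham⟩, ?_, le_rfl, hm⟩,
      .of_eq (by simp [descRun_self])⟩
    exact forall_mem_append.2 ⟨fun r hr => (hLb r hr).trans (hba.trans_lt ham),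
      forall_mem_singleton.2 (hba.trans_lt ham)⟩
  rcases eq_or_ne m b with rfl | hmb
  · refine ⟨1, L ++ [(a, m)], isJonesNF_append_singleton.2 ⟨hL, hLb, hba, hac⟩, ?_⟩
    calc TLEq n (jonesWord n (L ++ [(a, m)]) ++ [gen n m])
          (jonesWord n L ++ tau n :: descRun n a m) := by
          simpa using (tleq_descRun_append_gen_self hba ha).append_left (jonesWord n L)
      TLEq n _ (replicate 1 (tau n) ++ jonesWord n (L ++ [(a, m)])) := by
          simpa using (tleq_append_replicate_tau (jonesWord n L) 1).append_right (descRun n a m)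
  obtain ⟨u, b', hu, hb'a, hword⟩ := hmb.lt_or_gt.elim
    (fun h => exists_descRun_append_gen_of_lt h hba ha)
    (fun h => exists_descRun_append_gen_of_gt h hma ha)
  refine ((ih a hac hL hu).append_descRun hb'a hac hc).of_tleq ?_
  calc TLEq n (jonesWord n (L ++ [(a, b)]) ++ [gen n m])
        (jonesWord n L ++ (descRun n a b ++ [gen n m])) := .of_eq (by simp)
    TLEq n _ (jonesWord n L ++ (u ++ descRun n a b')) := hword.append_left _
    _ = jonesWord n L ++ u ++ descRun n a b' := by rw [append_assoc]

theorem hasJonesNF_jonesWord_append (hc : c ≤ n - 1) {L : List (ℕ × ℕ)} {u : List (TLGen n)}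
    (hL : IsJonesNF c L) (hu : LettersBelow c u) : HasJonesNF c (jonesWord n L ++ u) := by
  induction c using Nat.strong_induction_on generalizing L u with
  | _ c ih =>
  induction u generalizing L with
  | nil => exact ⟨0, L, hL, .of_eq (by simp)⟩
  | cons x u ihu =>
    obtain ⟨p, L₁, hL₁, hx⟩ : HasJonesNF c (jonesWord n L ++ [x]) := by
      rcases hu x mem_cons_self with rfl | ⟨m, hm, rfl⟩
      · exact ⟨1, L, hL, by simpa using tleq_append_replicate_tau (jonesWord n L) 1⟩
      · exact hasJonesNF_jonesWord_append_gen hc (fun a ha _ _ => ih a ha (by omega)) hL hm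
    refine ((ihu hL₁ fun y hy => hu y (mem_cons_of_mem x hy)).replicate_tau_append p).of_tleq ?_
    calc TLEq n (jonesWord n L ++ x :: u) ((jonesWord n L ++ [x]) ++ u) := .of_eq (by simp)
      TLEq n _ (replicate p (tau n) ++ jonesWord n L₁ ++ u) := hx.append_right u
      _ = _ := append_assoc ..

theorem run_eq_descRun {i j : Fin (n - 1)} (h : j ≤ i) : run n i j = descRun n i j := by
  rw [run, descRun, show (i : ℕ) + 1 - j = i - j + 1 by omega]
  exact map_congr_left fun t _ => (gen_of_lt _).symm

theorem IsJonesNF.exists_strictMono {L : List (ℕ × ℕ)} (hL : IsJonesNF (n - 1) L) :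
    ∃ (r : ℕ) (I J : Fin r → Fin (n - 1)),
      StrictMono I ∧ StrictMono J ∧ (∀ k, J k ≤ I k) ∧
      jonesWord n L = (ofFn fun k => run n (I k) (J k)).flatten := by
  have hbound (k : Fin L.length) : L[k].2 ≤ L[k].1 ∧ L[k].1 < n - 1 :=
    ⟨hL.snd_le_fst _ (getElem_mem _), hL.fst_lt _ (getElem_mem _)⟩
  have hlt {k l : Fin L.length} (hkl : k < l) : L[k].1 < L[l].1 ∧ L[k].2 < L[l].2 :=
    pairwise_iff_getElem.1 hL.pairwise k l k.isLt l.isLt hkl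
  refine ⟨L.length, fun k => ⟨L[k].1, (hbound k).2⟩,
    fun k => ⟨L[k].2, (hbound k).1.trans_lt (hbound k).2⟩,
    fun k l hkl => (hlt hkl).1, fun k l hkl => (hlt hkl).2, fun k => (hbound k).1, ?_⟩
  rw [jonesWord, ← ofFn_getElem_eq_map]
  congr 1
  exact ofFn_inj.2 (funext fun k => (run_eq_descRun (Fin.mk_le_mk.2 (hbound k).1)).symm)

end Closure

/-- Every element of `M n` is equal to a word in Jones normal form
`τ^p (e_{i_1} ⋯ e_{j_1}) ⋯ (e_{i_r} ⋯ e_{j_r})` with `i_1 < ⋯ < i_r`,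
`j_1 < ⋯ < j_r` and `j_k ≤ i_k`. -/
theorem exists_jones_normal_form (n : ℕ) (w : List (TLGen n)) :
    ∃ (p r : ℕ) (I J : Fin r → Fin (n - 1)),
      StrictMono I ∧ StrictMono J ∧ (∀ k, J k ≤ I k) ∧
      TLEq n w
        (List.replicate p (tau n) ++ (List.ofFn fun k => run n (I k) (J k)).flatten) := by
  have hw : LettersBelow (n - 1) w := fun x _ => by
    rcases x with i | ⟨⟩
    · exact Or.inr ⟨i, i.isLt, (gen_val i).symm⟩
    · exact Or.inl rfl
  obtain ⟨p, L, hL, hwL⟩ := hasJonesNF_jonesWord_append le_rfl IsJonesNF.nil hw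
  obtain ⟨r, I, J, hI, hJ, hJI, hLword⟩ := hL.exists_strictMono
  rw [jonesWord_nil, nil_append, hLword] at hwL
  exact ⟨p, r, I, J, hI, hJ, hJI, hwL⟩
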